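/- Let ε be a real number with 0 ≤ ε ≤ 1. Every bipartite multigraph G has a factor F such that for each vertex v, |d_F(v) − ε·d_G(v)| < 1. -/

import Mathlib

open Finset

namespace Paper

variable {V E τ : Type*}

/-- Degree of vertex `v` in the edge subset `S` of a multigraph whose edges `e : E`
have endpoints `ends e : Sym2 V`. -/
noncomputable def mdeg (ends : E → Sym2 V) (S : Set E) (v : V) : ℕ :=
  {e ∈ S | v ∈ ends e}.ncard

/-- The multigraph given by `ends` has no loops. -/
def Loopless (ends : E → Sym2 V) : Prop := ∀ e : E, ¬ (ends e).IsDiag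

/-- Edges of `S` with (at least) one end inside `A` and one end outside `A`;
for loopless multigraphs these are the edges with exactly one end in `A`. -/
def crossEdges (ends : E → Sym2 V) (S : Set E) (A : Set V) : Set E :=
  {e ∈ S | (∃ x ∈ ends e, x ∈ A) ∧ ∃ y ∈ ends e, y ∉ A}

/-- The (spanning sub)multigraph with edge set `S` is `k`-edge-connected. -/
def MEdgeConnected (ends : E → Sym2 V) (S : Set E) (k : ℕ) : Prop :=
  ∀ A : Set V, A.Nonempty → A ≠ Set.univ → k ≤ (crossEdges ends S A).ncard

/-- The simple graph on `V` underlying the edge subset `S`. -/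
def toSimple (ends : E → Sym2 V) (S : Set E) : SimpleGraph V where
  Adj u v := u ≠ v ∧ ∃ e ∈ S, ends e = s(u, v)
  symm := by
    constructor
    rintro u v ⟨h, e, he, h2⟩
    exact ⟨h.symm, e, he, by rwa [Sym2.eq_swap]⟩
  loopless := by constructor; rintro v ⟨h, -⟩; exact h rfl

/-- The edge subset `S` forms a spanning tree of the multigraph given by `ends`. -/
def IsSpanningTree [Fintype V] (ends : E → Sym2 V) (S : Set E) : Prop :=
  (toSimple ends S).Connected ∧ S.ncard = Fintype.card V - 1

/-- The (spanning sub)multigraph with edge set `S` contains `m` pairwise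
edge-disjoint spanning trees. -/
def TreeConnected [Fintype V] (ends : E → Sym2 V) (S : Set E) (m : ℕ) : Prop :=
  ∃ Tr : Fin m → Set E, (∀ i, Tr i ⊆ S) ∧
    (Pairwise fun i j => Disjoint (Tr i) (Tr j)) ∧
    ∀ i, IsSpanningTree ends (Tr i)

/-- The edge subset `S` has an orientation (each edge `e ∈ S` gets a tail `o e`,
one of its endpoints) in which every vertex has out-degree at least `l`. -/
def HasOrientationOutdeg (ends : E → Sym2 V) (S : Set E) (l : ℕ) : Prop :=
  ∃ o : E → V, (∀ e ∈ S, o e ∈ ends e) ∧ ∀ v : V, l ≤ {e ∈ S | o e = v}.ncard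

/-- The (spanning sub)multigraph with edge set `S` is `(m, l)`-partition-connected. -/
def PartitionConnected [Fintype V] (ends : E → Sym2 V) (S : Set E) (m l : ℕ) : Prop :=
  ∃ Tm F : Set E, Disjoint Tm F ∧ Tm ∪ F = S ∧
    TreeConnected ends Tm m ∧ HasOrientationOutdeg ends F l

/-- `(X, Y)` is a bipartition of the multigraph given by `ends`. -/
def MBipartition (ends : E → Sym2 V) (X Y : Set V) : Prop :=
  Disjoint X Y ∧ X ∪ Y = Set.univ ∧ ∀ e : E, ∃ x ∈ X, ∃ y ∈ Y, ends e = s(x, y)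

open Classical in
/-- Sum of an integer-valued function over a set of vertices. -/
noncomputable def setSum [Fintype V] (A : Set V) (f : V → ℤ) : ℤ :=
  ∑ v ∈ Finset.univ.filter (· ∈ A), f v

/-! ### Simple graphs -/

/-- Degree of `v` in a simple graph. -/
noncomputable def sdeg (G : SimpleGraph V) (v : V) : ℕ := (G.neighborSet v).ncard

/-- A simple graph is `k`-edge-connected. -/
def SEdgeConnected (G : SimpleGraph V) (k : ℕ) : Prop :=
  ∀ A : Set V, A.Nonempty → A ≠ Set.univ →
    k ≤ {e ∈ G.edgeSet | (∃ x ∈ e, x ∈ A) ∧ ∃ y ∈ e, y ∉ A}.ncard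

/-- A simple graph is `(m, l)`-partition-connected. -/
def SPartitionConnected [Fintype V] (G : SimpleGraph V) (m l : ℕ) : Prop :=
  PartitionConnected (fun e : G.edgeSet => (e : Sym2 V)) Set.univ m l

/-- `A` is one of the two partite sets of (a bipartition of) `G`. -/
def BipartitionSide (G : SimpleGraph V) (A : Set V) : Prop :=
  ∀ a b, G.Adj a b → (a ∈ A ↔ b ∉ A)

/-- `f` maps `T` onto a copy of `T` inside `G` (a subgraph isomorphic to `T`). -/
def IsCopy (T : SimpleGraph τ) (G : SimpleGraph V) (f : τ → V) : Prop :=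
  Function.Injective f ∧ ∀ a b, T.Adj a b → G.Adj (f a) (f b)

/-- Edge set of the copy of `T` given by `f`. -/
def copyEdges (T : SimpleGraph τ) (f : τ → V) : Set (Sym2 V) := Sym2.map f '' T.edgeSet

/-- `G` admits a `T`-edge-decomposition: its edge set is partitioned into
edge sets of copies of `T`. -/
def HasTDecomposition (T : SimpleGraph τ) (G : SimpleGraph V) : Prop :=
  ∃ (n : ℕ) (f : Fin n → τ → V),
    (∀ i, IsCopy T G (f i)) ∧
    (Pairwise fun i j => Disjoint (copyEdges T (f i)) (copyEdges T (f j))) ∧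
    ⋃ i, copyEdges T (f i) = G.edgeSet

open Classical in
/-- The non-leaf vertices of `T` lying in `A`. -/
noncomputable def nonLeaf [Fintype τ] (T : SimpleGraph τ) (A : Set τ) : Finset τ :=
  Finset.univ.filter (fun v => v ∈ A ∧ 2 ≤ sdeg T v)

/-- The subgraph of `G` induced by `X`, viewed as a graph on the same vertex set. -/
def inducedOn (G : SimpleGraph V) (X : Set V) : SimpleGraph V where
  Adj u v := G.Adj u v ∧ u ∈ X ∧ v ∈ X
  symm := by constructor; rintro u v ⟨h, hu, hv⟩; exact ⟨h.symm, hv, hu⟩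
  loopless := by constructor; rintro v ⟨h, -⟩; exact G.loopless.irrefl v h

open Matrix

/-!
Start from the fractional factor `x ≡ ε`, whose weighted degrees are exactly `ε d_G(v)`, and
round it to a `0/1` vector while keeping every weighted degree between `⌊ε d_G(v)⌋` and
`⌈ε d_G(v)⌉`. While some edges are fractional, there is a nonzero `z` supported on them whose
weighted degree vanishes at every vertex meeting at least two of them: otherwise there would be
too few unknowns for these equations, and in the critical case one equation is redundant because
the vector `±1` on the two sides of the bipartition annihilates the incidence matrix. Moving `x`
along `z` until one more coordinate reaches `0` or `1` keeps those degrees fixed, and a vertex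
with a single fractional edge stays in its integer window because that edge's weight stays in
`[0, 1]`.
-/

theorem add_int_mem_Icc_of_mem_Ioo {a b m : ℤ} {r r' : ℝ} (hr : r ∈ Set.Ioo 0 1)
    (hr' : r' ∈ Set.Icc 0 1) (h : r + m ∈ Set.Icc (a : ℝ) b) :
    r' + m ∈ Set.Icc (a : ℝ) b := by
  have ha : a ≤ m := Int.lt_add_one_iff.mp <| by
    exact_mod_cast h.1.trans_lt (by linarith [hr.2] : r + m < m + 1)
  have hb : m + 1 ≤ b := Int.add_one_le_iff.mpr <| by
    exact_mod_cast (by linarith [hr.1] : (m : ℝ) < r + m).trans_le h.2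
  have ha' : (a : ℝ) ≤ m := by exact_mod_cast ha
  have hb' : (m : ℝ) + 1 ≤ b := by exact_mod_cast hb
  exact ⟨by linarith [hr'.1], by linarith [hr'.2]⟩

theorem abs_intCast_sub_lt_one_of_floor_le_of_le_ceil {n : ℤ} {t : ℝ} (h₁ : ⌊t⌋ ≤ n)
    (h₂ : n ≤ ⌈t⌉) : |(n : ℝ) - t| < 1 := by
  have h₁' : t - 1 < n := (Int.sub_one_lt_floor t).trans_le (by exact_mod_cast h₁)
  have h₂' : (n : ℝ) < t + 1 := (Int.cast_le.mpr h₂).trans_lt (Int.ceil_lt_add_one t)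
  rw [abs_sub_lt_iff]
  constructor <;> linarith

theorem exists_pos_add_mul_notMem_Ioo {x c : ℝ} (hx : x ∈ Set.Ioo 0 1) (hc : c ≠ 0) :
    ∃ τ > 0, x + τ * c ∉ Set.Ioo 0 1 ∧
      ∀ s ∈ Set.Icc 0 τ, x + s * c ∈ Set.Icc 0 1 := by
  obtain ⟨hx0, hx1⟩ := hx
  rcases hc.lt_or_gt with hc | hc
  · refine ⟨x / -c, div_pos hx0 (neg_pos.mpr hc), ?_, fun s ⟨hs0, hs⟩ => ⟨?_, ?_⟩⟩
    · simp [div_neg, div_mul_cancel₀ _ hc.ne]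
    · have := mul_le_mul_of_nonpos_right hs hc.le
      rw [div_neg, neg_mul, div_mul_cancel₀ _ hc.ne] at this
      linarith
    · nlinarith
  · refine ⟨(1 - x) / c, div_pos (by linarith) hc, ?_, fun s ⟨hs0, hs⟩ => ⟨?_, ?_⟩⟩
    · simp [div_mul_cancel₀ _ hc.ne']
    · nlinarith
    · have := mul_le_mul_of_nonneg_right hs hc.le
      rw [div_mul_cancel₀ _ hc.ne'] at this
      linarith

theorem _root_.Matrix.exists_ne_zero_mulVec_eq_zero_on_of_card_lt {m n K : Type*} [Fintype m]
    [Fintype n] [Field K] (A : Matrix m n K) {W : Finset m} {S : Finset n} (h : #W < #S) :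
    ∃ z : n → K, z ≠ 0 ∧ (∀ j ∉ S, z j = 0) ∧ ∀ i ∈ W, (A *ᵥ z) i = 0 := by
  set B := A.submatrix ((↑) : W → m) ((↑) : S → n)
  have hker : LinearMap.ker B.mulVecLin ≠ ⊥ :=
    LinearMap.ker_ne_bot_of_finrank_lt (by simpa using h)
  obtain ⟨w, hw, hw0⟩ := (Submodule.ne_bot_iff _).mp hker
  set z : n → K := Function.extend ((↑) : S → n) w 0
  have hz : ∀ j : S, z j = w j := Subtype.val_injective.extend_apply w 0
  have hzS : ∀ j ∉ S, z j = 0 := fun j hj =>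
    Function.extend_apply' _ _ _ fun ⟨k, hk⟩ => hj (hk ▸ k.2)
  refine ⟨z, fun h0 => hw0 (funext fun j => by rw [← hz j, h0]; rfl), hzS, fun i hi => ?_⟩
  calc (A *ᵥ z) i = ∑ j ∈ S, A i j * z j :=
        (Finset.sum_subset (subset_univ S) fun j _ hj => by simp [hzS j hj]).symm
    _ = (B *ᵥ w) ⟨i, hi⟩ := by
        rw [← Finset.sum_coe_sort S]; simp [B, mulVec, dotProduct, hz]
    _ = 0 := congrFun hw _

theorem _root_.Sym2.card_filter_mem_le_two {V : Type*} [Fintype V] [DecidableEq V] (z : Sym2 V) :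
    #{v | v ∈ z} ≤ 2 := by
  have : ({v | v ∈ z} : Finset V) = z.toFinset := by ext; simp [Sym2.mem_toFinset]
  rw [this, Sym2.card_toFinset]
  split_ifs <;> omega

section Incidence

variable [DecidableEq V] {ends : E → Sym2 V}

def incMatrix (ends : E → Sym2 V) : Matrix V E ℝ := .of fun v e => if v ∈ ends e then 1 else 0

theorem vecMul_incMatrix_eq_zero [Fintype V] {X Y : Set V} (hbip : MBipartition ends X Y) :
    (X.indicator 1 - Y.indicator 1) ᵥ* incMatrix ends = 0 := by
  ext e
  obtain ⟨x, hx, y, hy, he⟩ := hbip.2.2 e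
  have hxY : x ∉ Y := Set.disjoint_left.mp hbip.1 hx
  have hyX : y ∉ X := Set.disjoint_right.mp hbip.1 hy
  have hxy : x ≠ y := fun h => hyX (h ▸ hx)
  have hfilter : ({v | v ∈ ends e} : Finset V) = {x, y} := by ext; simp [he]
  simp only [vecMul, dotProduct, incMatrix, of_apply, mul_ite, mul_one, mul_zero,
    ← Finset.sum_filter, hfilter, Finset.sum_pair hxy]
  simp [hx, hy, hxY, hyX]

theorem card_add_card_le_two_mul_card [Fintype V] (ends : E → Sym2 V) (S : Finset E) :
    #{v | 1 ≤ #{e ∈ S | v ∈ ends e}} + #{v | 2 ≤ #{e ∈ S | v ∈ ends e}} ≤ 2 * #S :=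
  calc _ = ∑ v, ((if 1 ≤ #{e ∈ S | v ∈ ends e} then 1 else 0) +
          (if 2 ≤ #{e ∈ S | v ∈ ends e} then 1 else 0)) := by
        rw [sum_add_distrib, card_filter, card_filter]
    _ ≤ ∑ v, #{e ∈ S | v ∈ ends e} := sum_le_sum fun v _ => by split_ifs <;> omega
    _ = ∑ e ∈ S, #{v | v ∈ ends e} := sum_card_bipartiteAbove_eq_sum_card_bipartiteBelow _
    _ ≤ ∑ e ∈ S, 2 := sum_le_sum fun e _ => (ends e).card_filter_mem_le_two
    _ = 2 * #S := by rw [sum_const, smul_eq_mul, mul_comm]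

variable [Fintype E]

theorem incMatrix_mulVec_apply (x : E → ℝ) (v : V) :
    (incMatrix ends *ᵥ x) v = ∑ e with v ∈ ends e, x e := by
  simp [mulVec, dotProduct, incMatrix, Finset.sum_filter]

theorem incMatrix_mulVec_indicator (F : Set E) (v : V) :
    (incMatrix ends *ᵥ F.indicator 1) v = mdeg ends F v := by
  classical
  have hF : {e ∈ F | v ∈ ends e} = (({e | v ∈ ends e ∧ e ∈ F} : Finset E) : Set E) := by
    ext; simp [and_comm]
  rw [incMatrix_mulVec_apply, mdeg, hF, Set.ncard_coe_finset, ← Finset.filter_filter,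
    Finset.card_filter]
  simp [Set.indicator_apply]

variable [Fintype V]

theorem incMatrix_mulVec_apply_eq_zero_of_forall_ne {X Y : Set V} (hbip : MBipartition ends X Y)
    {z : E → ℝ} {u : V} (h : ∀ v ≠ u, (incMatrix ends *ᵥ z) v = 0) :
    (incMatrix ends *ᵥ z) u = 0 := by
  have hs : (X.indicator 1 - Y.indicator 1) ⬝ᵥ (incMatrix ends *ᵥ z) = 0 := by
    rw [dotProduct_mulVec, vecMul_incMatrix_eq_zero hbip, zero_dotProduct]
  rw [dotProduct, Finset.sum_eq_single u (fun v _ hv => by rw [h v hv, mul_zero])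
    (by simp)] at hs
  refine (mul_eq_zero.mp hs).resolve_left ?_
  rcases (hbip.2.1 ▸ Set.mem_univ u : u ∈ X ∪ Y) with hu | hu
  · simp [hu, Set.disjoint_left.mp hbip.1 hu]
  · simp [hu, Set.disjoint_right.mp hbip.1 hu]

theorem exists_ne_zero_incMatrix_mulVec_eq_zero {X Y : Set V} (hbip : MBipartition ends X Y)
    {S : Finset E} (hS : S.Nonempty) :
    ∃ z : E → ℝ, z ≠ 0 ∧ (∀ e ∉ S, z e = 0) ∧
      ∀ v, 2 ≤ #{e ∈ S | v ∈ ends e} → (incMatrix ends *ᵥ z) v = 0 := by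
  set U : Finset V := {v | 1 ≤ #{e ∈ S | v ∈ ends e}}
  set W : Finset V := {v | 2 ≤ #{e ∈ S | v ∈ ends e}}
  have hcount : #U + #W ≤ 2 * #S := card_add_card_le_two_mul_card ends S
  -- If the equations at `W` are not fewer than the unknowns, those at `U` minus one vertex `u`
  -- are, and the equation at `u` follows from the others by bipartiteness.
  by_cases hW : #W < #S
  · obtain ⟨z, hz0, hzS, hzW⟩ :=
      (incMatrix ends).exists_ne_zero_mulVec_eq_zero_on_of_card_lt hW
    exact ⟨z, hz0, hzS, fun v hv => hzW v (by simpa [W] using hv)⟩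
  have hU : ∀ e ∈ S, ∀ v ∈ ends e, v ∈ U := fun e he v hv =>
    mem_filter.mpr ⟨mem_univ v, card_pos.mpr ⟨e, mem_filter.mpr ⟨he, hv⟩⟩⟩
  obtain ⟨e₀, he₀⟩ := hS
  obtain ⟨u, hu⟩ : ∃ u, u ∈ U := ⟨_, hU e₀ he₀ _ (Sym2.out_fst_mem (ends e₀))⟩
  have hcard : #(U.erase u) < #S := by
    have := card_pos.mpr ⟨u, hu⟩
    rw [card_erase_of_mem hu]
    omega
  obtain ⟨z, hz0, hzS, hzU⟩ :=
    (incMatrix ends).exists_ne_zero_mulVec_eq_zero_on_of_card_lt hcard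
  have hne : ∀ v ≠ u, (incMatrix ends *ᵥ z) v = 0 := by
    intro v hv
    by_cases hvU : v ∈ U
    · exact hzU v (mem_erase.mpr ⟨hv, hvU⟩)
    exact (incMatrix_mulVec_apply z v).trans <| sum_eq_zero fun e he =>
      hzS e fun heS => hvU (hU e heS v (mem_filter.mp he).2)
  refine ⟨z, hz0, hzS, fun v _ => ?_⟩
  obtain rfl | hv := eq_or_ne v u
  · exact incMatrix_mulVec_apply_eq_zero_of_forall_ne hbip hne
  · exact hne v hv

end Incidence

section Rounding

variable [Fintype E]

noncomputable def fractionalEdges (x : E → ℝ) : Finset E := {e | x e ∈ Set.Ioo 0 1}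

theorem eq_zero_or_eq_one_of_notMem_fractionalEdges {x : E → ℝ} {e : E}
    (hx : x e ∈ Set.Icc 0 1) (he : e ∉ fractionalEdges x) : x e = 0 ∨ x e = 1 := by
  simp only [fractionalEdges, mem_filter, mem_univ, true_and, Set.mem_Ioo, not_and_or,
    not_lt] at he
  rcases he with h | h
  · exact .inl (le_antisymm h hx.1)
  · exact .inr (le_antisymm hx.2 h)

theorem exists_add_smul_mem_Icc_fractionalEdges_ssubset {x z : E → ℝ}
    (hx : ∀ e, x e ∈ Set.Icc 0 1) (hz : ∀ e ∉ fractionalEdges x, z e = 0) (hz0 : z ≠ 0) :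
    ∃ t : ℝ, (∀ e, (x + t • z) e ∈ Set.Icc 0 1) ∧
      fractionalEdges (x + t • z) ⊂ fractionalEdges x := by
  have hfrac : ∀ e, z e ≠ 0 → e ∈ fractionalEdges x := fun e => not_imp_comm.mp (hz e)
  have hfrac' : ∀ e, z e ≠ 0 → x e ∈ Set.Ioo 0 1 := fun e he => by
    simpa [fractionalEdges] using hfrac e he
  choose! τ hτpos hτhit hτIcc using fun e (he : z e ≠ 0) =>
    exists_pos_add_mul_notMem_Ioo (hfrac' e he) he
  obtain ⟨e₀, he₀, hmin⟩ := ({e | z e ≠ 0} : Finset E).exists_min_image τ <| by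
    simpa [Finset.Nonempty, Function.ne_iff] using hz0
  simp only [mem_filter, mem_univ, true_and] at he₀ hmin
  refine ⟨τ e₀, fun e => ?_,
    (ssubset_iff_of_subset fun e he => ?_).mpr ⟨e₀, hfrac e₀ he₀, ?_⟩⟩
  · by_cases he : z e = 0
    · simpa [he] using hx e
    · exact hτIcc e he _ ⟨(hτpos e₀ he₀).le, hmin e he⟩
  · by_cases hze : z e = 0
    · simpa [fractionalEdges, hze] using he
    · exact hfrac e hze
  · simpa [fractionalEdges] using hτhit e₀ he₀

variable [DecidableEq V] {ends : E → Sym2 V}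

theorem incMatrix_mulVec_mem_Icc_of_card_le_one {x y : E → ℝ} (hx : ∀ e, x e ∈ Set.Icc 0 1)
    (hy : ∀ e, y e ∈ Set.Icc 0 1) (hxy : ∀ e ∉ fractionalEdges x, y e = x e) {v : V}
    (hv : #{e ∈ fractionalEdges x | v ∈ ends e} ≤ 1) {a b : ℤ}
    (h : (incMatrix ends *ᵥ x) v ∈ Set.Icc (a : ℝ) b) :
    (incMatrix ends *ᵥ y) v ∈ Set.Icc (a : ℝ) b := by
  classical
  set F := fractionalEdges x
  have hsplit : ∀ w : E → ℝ, (incMatrix ends *ᵥ w) v =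
      ∑ e ∈ F with v ∈ ends e, w e + ∑ e with v ∈ ends e ∧ e ∉ F, w e := fun w => by
    rw [incMatrix_mulVec_apply, ← sum_filter_add_sum_filter_not _ (· ∈ F), filter_filter,
      filter_filter]
    congr 2
    ext; simp [and_comm]
  obtain ⟨m, hm⟩ : ∃ m : ℕ, ∑ e with v ∈ ends e ∧ e ∉ F, x e = m := by
    refine ⟨#{e ∈ {e | v ∈ ends e ∧ e ∉ F} | x e = 1}, ?_⟩
    rw [natCast_card_filter]
    refine sum_congr rfl fun e he => ?_
    rcases eq_zero_or_eq_one_of_notMem_fractionalEdges (hx e) (mem_filter.mp he).2.2 with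
      h | h <;> simp [h]
  have hmy : ∑ e with v ∈ ends e ∧ e ∉ F, y e = m :=
    hm ▸ sum_congr rfl fun e he => hxy e (mem_filter.mp he).2.2
  rw [hsplit, hm] at h
  rw [hsplit, hmy]
  rcases Nat.le_one_iff_eq_zero_or_eq_one.mp hv with h0 | h1
  · simpa [card_eq_zero.mp h0] using h
  · obtain ⟨e, he⟩ := card_eq_one.mp h1
    have heF : e ∈ F := (mem_filter.mp (he ▸ mem_singleton_self e)).1
    rw [he, sum_singleton] at h ⊢
    exact_mod_cast add_int_mem_Icc_of_mem_Ioo (m := m)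
      (by simpa [F, fractionalEdges] using heF) (hy e) (by exact_mod_cast h)

variable [Fintype V]

theorem exists_fractionalEdges_ssubset {X Y : Set V} (hbip : MBipartition ends X Y)
    {a b : V → ℤ} {x : E → ℝ} (hx : ∀ e, x e ∈ Set.Icc 0 1)
    (hab : ∀ v, (incMatrix ends *ᵥ x) v ∈ Set.Icc (a v : ℝ) (b v))
    (hfrac : (fractionalEdges x).Nonempty) :
    ∃ y : E → ℝ, (∀ e, y e ∈ Set.Icc 0 1) ∧
      (∀ v, (incMatrix ends *ᵥ y) v ∈ Set.Icc (a v : ℝ) (b v)) ∧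
      fractionalEdges y ⊂ fractionalEdges x := by
  obtain ⟨z, hz0, hzF, hzv⟩ := exists_ne_zero_incMatrix_mulVec_eq_zero hbip hfrac
  obtain ⟨t, hy, hlt⟩ := exists_add_smul_mem_Icc_fractionalEdges_ssubset hx hzF hz0
  refine ⟨x + t • z, hy, fun v => ?_, hlt⟩
  by_cases hv : 2 ≤ #{e ∈ fractionalEdges x | v ∈ ends e}
  · simpa [mulVec_add, mulVec_smul, hzv v hv] using hab v
  · exact incMatrix_mulVec_mem_Icc_of_card_le_one hx hy (fun e he => by simp [hzF e he])
      (by omega) (hab v)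

theorem exists_mdeg_mem_Icc_of_incMatrix_mulVec_mem_Icc {X Y : Set V}
    (hbip : MBipartition ends X Y) {a b : V → ℤ} (x : E → ℝ)
    (hx : ∀ e, x e ∈ Set.Icc 0 1)
    (hab : ∀ v, (incMatrix ends *ᵥ x) v ∈ Set.Icc (a v : ℝ) (b v)) :
    ∃ F : Set E, ∀ v, (mdeg ends F v : ℤ) ∈ Set.Icc (a v) (b v) := by
  induction hn : #(fractionalEdges x) using Nat.strong_induction_on generalizing x with
  | _ n ih =>
  rcases (fractionalEdges x).eq_empty_or_nonempty with h | h
  · have hxF : x = {e | x e = 1}.indicator 1 := funext fun e => by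
      rcases eq_zero_or_eq_one_of_notMem_fractionalEdges (hx e) (h ▸ notMem_empty e) with
        he | he <;> simp [he]
    refine ⟨{e | x e = 1}, fun v => ?_⟩
    have := hab v
    rw [hxF, incMatrix_mulVec_indicator] at this
    exact ⟨by exact_mod_cast this.1, by exact_mod_cast this.2⟩
  · obtain ⟨y, hy, hyab, hlt⟩ := exists_fractionalEdges_ssubset hbip hx hab h
    exact ih _ (hn ▸ card_lt_card hlt) y hy hyab rfl

end Rounding

/-- (Hoffman.)  Every bipartite multigraph `G` has a factor `F` with
`|d_F(v) - ε·d_G(v)| < 1` for every vertex `v`. -/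
theorem stmt11 {V E : Type*} [Fintype V] [Fintype E]
    (ends : E → Sym2 V) (X Y : Set V) (hbip : MBipartition ends X Y)
    (ε : ℝ) (hε1 : 0 ≤ ε) (hε2 : ε ≤ 1) :
    ∃ F : Set E, ∀ v : V,
      |(mdeg ends F v : ℝ) - ε * (mdeg ends Set.univ v : ℝ)| < 1 := by
  classical
  have hε : ∀ v, (incMatrix ends *ᵥ fun _ => ε) v = ε * mdeg ends Set.univ v := fun v => by
    rw [show (fun _ => ε) = ε • Set.univ.indicator (1 : E → ℝ) by ext; simp, mulVec_smul,
      Pi.smul_apply, incMatrix_mulVec_indicator, smul_eq_mul]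
  obtain ⟨F, hF⟩ := exists_mdeg_mem_Icc_of_incMatrix_mulVec_mem_Icc hbip
    (a := fun v => ⌊ε * mdeg ends Set.univ v⌋) (b := fun v => ⌈ε * mdeg ends Set.univ v⌉)
    (fun _ => ε) (fun _ => ⟨hε1, hε2⟩) fun v => hε v ▸ ⟨Int.floor_le _, Int.le_ceil _⟩
  exact ⟨F, fun v => by
    exact_mod_cast abs_intCast_sub_lt_one_of_floor_le_of_le_ceil (hF v).1 (hF v).2⟩

end Paper
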